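/- Under the self-censoring assumption R_i ⫫ Y_{-i} | (X, Y_i, R_{-i}) and positivity, the itemwise odds function O_i satisfies the integral equation E{O_i(X, Y_i) | X = x, Y_{-i} = y_{-i}, R = 1} = f(x, y_{-i}, R_i = 0, R_{-i} = 1) / f(x, y_{-i}, R = 1), where the expectation on the left is over Y_i given (X = x, Y_{-i} = y_{-i}, R = 1). -/

import Mathlib

/-! Fix the stratum `B = {X = x, Y_i = y_i, R_{-i} = 1}`. Self-censoring factorises
`P(R_i = a, Y_{-i} = y_{-i} | B)` as `P(R_i = a | B) · P(Y_{-i} = y_{-i} | B)` for both values of `a`,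
so the joint mass of `(B, Y_{-i} = y_{-i})` with `R_i = 0` is the odds `O_i(x, y_i)` times the one
with `R_i = 1`; positivity keeps `P(R_i = 1 | B)` away from zero. Summing over `y_i` turns the
left-hand masses into `f(x, y_{-i}, R_i = 0, R_{-i} = 1)`. -/

open Finset
open scoped Classical

noncomputable def pr {Ω : Type*} [Fintype Ω] (μ : Ω → ℝ) (A : Ω → Prop) : ℝ :=
  ∑ ω, if A ω then μ ω else 0

noncomputable def cpr {Ω : Type*} [Fintype Ω] (μ : Ω → ℝ) (A B : Ω → Prop) : ℝ :=
  pr μ (fun ω => A ω ∧ B ω) / pr μ B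

/-- The itemwise odds function `O_i(x, y_i)`. -/
noncomputable def oddsFn {Ω 𝒳 𝒴 : Type*} [Fintype Ω] {p : ℕ} (μ : Ω → ℝ)
    (X : Ω → 𝒳) (Y : Ω → Fin p → 𝒴) (R : Ω → Fin p → Bool)
    (i : Fin p) (x : 𝒳) (yi : 𝒴) : ℝ :=
  cpr μ (fun ω => R ω i = false)
      (fun ω => X ω = x ∧ Y ω i = yi ∧ ∀ j, j ≠ i → R ω j = true) /
    cpr μ (fun ω => R ω i = true)
      (fun ω => X ω = x ∧ Y ω i = yi ∧ ∀ j, j ≠ i → R ω j = true)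

section pr

variable {Ω : Type*} [Fintype Ω] {μ : Ω → ℝ}

lemma pr_congr {A B : Ω → Prop} (h : ∀ ω, A ω ↔ B ω) : pr μ A = pr μ B := by
  simp only [pr, h]

lemma pr_mono (hμ : ∀ ω, 0 ≤ μ ω) {A B : Ω → Prop} (h : ∀ ω, A ω → B ω) :
    pr μ A ≤ pr μ B := by
  refine sum_le_sum fun ω _ => ?_
  by_cases hA : A ω
  · simp [hA, h ω hA]
  · simp only [hA, if_false]
    split <;> simp [hμ ω]

lemma pr_nonneg (hμ : ∀ ω, 0 ≤ μ ω) (A : Ω → Prop) : 0 ≤ pr μ A := by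
  simpa [pr] using pr_mono hμ (A := fun _ => False) (B := A) (by simp)

lemma pr_pos_of_mem (hμ : ∀ ω, 0 ≤ μ ω) {A : Ω → Prop} {ω₀ : Ω} (hA : A ω₀) (hω₀ : 0 < μ ω₀) :
    0 < pr μ A :=
  sum_pos' (fun ω _ => by split <;> simp [hμ ω]) ⟨ω₀, mem_univ _, by simpa [hA] using hω₀⟩

lemma exists_mem_pos_of_pr_pos {A : Ω → Prop} (h : 0 < pr μ A) : ∃ ω, A ω ∧ 0 < μ ω := by
  obtain ⟨ω, -, hω⟩ := exists_lt_of_sum_lt (s := univ) (f := fun _ => (0 : ℝ)) (by simpa [pr] using h)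
  by_cases hA : A ω
  · exact ⟨ω, hA, by simpa [hA] using hω⟩
  · simp [hA] at hω

lemma pr_and_pos_of_cpr_pos (hμ : ∀ ω, 0 ≤ μ ω) {A B : Ω → Prop} (h : 0 < cpr μ A B) :
    0 < pr μ (fun ω => A ω ∧ B ω) :=
  (div_pos_iff_of_pos_right <| (pr_nonneg hμ B).lt_of_ne fun h0 => by simp [cpr, ← h0] at h).mp h

lemma sum_pr_and_eq {𝒴 : Type*} [Fintype 𝒴] (f : Ω → 𝒴) (A : Ω → Prop) :
    ∑ v, pr μ (fun ω => A ω ∧ f ω = v) = pr μ A := by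
  unfold pr
  rw [sum_comm]
  refine sum_congr rfl fun ω _ => ?_
  by_cases hA : A ω <;> simp [hA]

lemma cpr_div_cpr_mul_pr_eq (hμ : ∀ ω, 0 ≤ μ ω) {A₀ A₁ E B : Ω → Prop}
    (h₀ : 0 < pr μ B → cpr μ (fun ω => A₀ ω ∧ E ω) B = cpr μ A₀ B * cpr μ E B)
    (h₁ : 0 < pr μ B → cpr μ (fun ω => A₁ ω ∧ E ω) B = cpr μ A₁ B * cpr μ E B)
    (hA₁ : 0 < pr μ B → 0 < pr μ (fun ω => A₁ ω ∧ B ω)) :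
    cpr μ A₀ B / cpr μ A₁ B * pr μ (fun ω => (A₁ ω ∧ E ω) ∧ B ω)
      = pr μ (fun ω => (A₀ ω ∧ E ω) ∧ B ω) := by
  rcases (pr_nonneg hμ B).lt_or_eq with hB | hB
  · have e₀ := h₀ hB
    have e₁ := h₁ hB
    have hN₁ := (hA₁ hB).ne'
    simp only [cpr] at e₀ e₁ ⊢
    field_simp at e₀ e₁ ⊢
    refine mul_right_cancel₀ hB.ne' ?_
    linear_combination pr μ (fun ω => A₀ ω ∧ B ω) * e₁ - pr μ (fun ω => A₁ ω ∧ B ω) * e₀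
  · have hE : pr μ (fun ω => (A₀ ω ∧ E ω) ∧ B ω) = 0 :=
      le_antisymm (hB ▸ pr_mono hμ fun _ h => h.2) (pr_nonneg hμ _)
    simp [cpr, ← hB, hE]

end pr

theorem stmt4_general {Ω 𝒳 𝒴 : Type*} [Fintype Ω] [Fintype 𝒴] {p : ℕ}
    (μ : Ω → ℝ) (hμ0 : ∀ ω, 0 ≤ μ ω)
    (X : Ω → 𝒳) (Y : Ω → Fin p → 𝒴) (R : Ω → Fin p → Bool)
    (selfcensor : ∀ (i : Fin p) (a : Bool) (x : 𝒳) (yi : 𝒴) (yv : Fin p → 𝒴)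
        (rv : Fin p → Bool),
      pr μ (fun ω => X ω = x ∧ Y ω i = yi ∧ ∀ j, j ≠ i → R ω j = rv j) > 0 →
      cpr μ (fun ω => R ω i = a ∧ ∀ j, j ≠ i → Y ω j = yv j)
          (fun ω => X ω = x ∧ Y ω i = yi ∧ ∀ j, j ≠ i → R ω j = rv j)
        = cpr μ (fun ω => R ω i = a)
            (fun ω => X ω = x ∧ Y ω i = yi ∧ ∀ j, j ≠ i → R ω j = rv j)
          * cpr μ (fun ω => ∀ j, j ≠ i → Y ω j = yv j)
            (fun ω => X ω = x ∧ Y ω i = yi ∧ ∀ j, j ≠ i → R ω j = rv j))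
    (hpos : ∀ (r' : Fin p → Bool) (x : 𝒳) (y : Fin p → 𝒴),
      pr μ (fun ω => X ω = x ∧ ∀ j, Y ω j = y j) > 0 →
      cpr μ (fun ω => ∀ j, R ω j = r' j) (fun ω => X ω = x ∧ ∀ j, Y ω j = y j) > 0)
    (i : Fin p) (x : 𝒳) (y : Fin p → 𝒴) :
    ∑ yi : 𝒴, oddsFn μ X Y R i x yi *
        cpr μ (fun ω => Y ω i = yi)
          (fun ω => X ω = x ∧ (∀ j, j ≠ i → Y ω j = y j) ∧ ∀ j, R ω j = true)
      = pr μ (fun ω => X ω = x ∧ (∀ j, j ≠ i → Y ω j = y j) ∧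
            R ω i = false ∧ ∀ j, j ≠ i → R ω j = true) /
        pr μ (fun ω => X ω = x ∧ (∀ j, j ≠ i → Y ω j = y j) ∧ ∀ j, R ω j = true) := by
  have hobserved : ∀ yi, 0 < pr μ (fun ω => X ω = x ∧ Y ω i = yi ∧ ∀ j, j ≠ i → R ω j = true) →
      0 < pr μ (fun ω => R ω i = true ∧ X ω = x ∧ Y ω i = yi ∧ ∀ j, j ≠ i → R ω j = true) := by
    intro yi hB
    obtain ⟨ω₀, hω₀, hμω₀⟩ := exists_mem_pos_of_pr_pos hB
    have hcomplete := pr_and_pos_of_cpr_pos hμ0 <|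
      hpos (fun _ => true) x (Y ω₀) (pr_pos_of_mem hμ0 ⟨hω₀.1, fun _ => rfl⟩ hμω₀)
    refine hcomplete.trans_le (pr_mono hμ0 fun ω ⟨hR, hX, hY⟩ => ?_)
    exact ⟨hR i, hX, (hY i).trans hω₀.2.1, fun j _ => hR j⟩
  have hterm : ∀ yi, oddsFn μ X Y R i x yi *
        pr μ (fun ω => Y ω i = yi ∧ X ω = x ∧ (∀ j, j ≠ i → Y ω j = y j) ∧ ∀ j, R ω j = true)
      = pr μ (fun ω => (X ω = x ∧ (∀ j, j ≠ i → Y ω j = y j) ∧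
            R ω i = false ∧ ∀ j, j ≠ i → R ω j = true) ∧ Y ω i = yi) := by
    intro yi
    convert cpr_div_cpr_mul_pr_eq hμ0 (selfcensor i false x yi y _) (selfcensor i true x yi y _)
      (hobserved yi) using 1
    · congr 1
      exact pr_congr fun ω => by rw [← and_forall_ne (p := fun j => R ω j = true) i]; tauto
    · exact pr_congr fun ω => by tauto
  calc _ = ∑ yi : 𝒴, pr μ (fun ω => (X ω = x ∧ (∀ j, j ≠ i → Y ω j = y j) ∧
            R ω i = false ∧ ∀ j, j ≠ i → R ω j = true) ∧ Y ω i = yi) /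
          pr μ (fun ω => X ω = x ∧ (∀ j, j ≠ i → Y ω j = y j) ∧ ∀ j, R ω j = true) :=
        sum_congr rfl fun yi _ => by rw [cpr, ← mul_div_assoc, hterm yi]
    _ = _ := by rw [← sum_div, sum_pr_and_eq]

/-- under self-censoring and positivity, the itemwise odds function
satisfies `E{O_i(X, Y_i) | x, y_{-i}, R = 1} = f(x, y_{-i}, R_i = 0, R_{-i} = 1) /
f(x, y_{-i}, R = 1)`. -/
theorem stmt4 {Ω 𝒳 𝒴 : Type*} [Fintype Ω] [Fintype 𝒴] {p : ℕ}
    (μ : Ω → ℝ) (hμ0 : ∀ ω, 0 ≤ μ ω) (hμ1 : ∑ ω, μ ω = 1)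
    (X : Ω → 𝒳) (Y : Ω → Fin p → 𝒴) (R : Ω → Fin p → Bool)
    (selfcensor : ∀ (i : Fin p) (a : Bool) (x : 𝒳) (yi : 𝒴) (yv : Fin p → 𝒴)
        (rv : Fin p → Bool),
      pr μ (fun ω => X ω = x ∧ Y ω i = yi ∧ ∀ j, j ≠ i → R ω j = rv j) > 0 →
      cpr μ (fun ω => R ω i = a ∧ ∀ j, j ≠ i → Y ω j = yv j)
          (fun ω => X ω = x ∧ Y ω i = yi ∧ ∀ j, j ≠ i → R ω j = rv j)
        = cpr μ (fun ω => R ω i = a)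
            (fun ω => X ω = x ∧ Y ω i = yi ∧ ∀ j, j ≠ i → R ω j = rv j)
          * cpr μ (fun ω => ∀ j, j ≠ i → Y ω j = yv j)
            (fun ω => X ω = x ∧ Y ω i = yi ∧ ∀ j, j ≠ i → R ω j = rv j))
    (hpos : ∀ (r' : Fin p → Bool) (x : 𝒳) (y : Fin p → 𝒴),
      pr μ (fun ω => X ω = x ∧ ∀ j, Y ω j = y j) > 0 →
      cpr μ (fun ω => ∀ j, R ω j = r' j) (fun ω => X ω = x ∧ ∀ j, Y ω j = y j) > 0)
    (i : Fin p) (x : 𝒳) (y : Fin p → 𝒴)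
    (hcond : pr μ (fun ω => X ω = x ∧ (∀ j, j ≠ i → Y ω j = y j) ∧
      ∀ j, R ω j = true) > 0) :
    ∑ yi : 𝒴, oddsFn μ X Y R i x yi *
        cpr μ (fun ω => Y ω i = yi)
          (fun ω => X ω = x ∧ (∀ j, j ≠ i → Y ω j = y j) ∧ ∀ j, R ω j = true)
      = pr μ (fun ω => X ω = x ∧ (∀ j, j ≠ i → Y ω j = y j) ∧
            R ω i = false ∧ ∀ j, j ≠ i → R ω j = true) /
        pr μ (fun ω => X ω = x ∧ (∀ j, j ≠ i → Y ω j = y j) ∧ ∀ j, R ω j = true) :=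
  stmt4_general μ hμ0 X Y R selfcensor hpos i x y
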